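/- arXiv:0909.0968 — 2 statements merged into one kernel-verified Lean document; each statement's English description precedes it below -/
import Mathlib

section
/- Let (S, 𝒲) be a set with walls and fix a basepoint p ∈ S. For x ∈ S let σ_p(x) denote the (finite) set of walls in 𝒲 separating x from p, and let f : S → ℓ²(𝒲; ℝ) be the map sending x to the characteristic function of σ_p(x). Then for all x, y ∈ S, ‖f(x) − f(y)‖² = d_𝒲(x, y); in particular, f is an isometric embedding of (S, √d_𝒲) into the real Hilbert space ℓ²(𝒲). -/
/-!
The wall count between `x` and `y` is the size of the symmetric difference `σ_p(x) ∆ σ_p(y)`,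
since a wall separates `x` from `y` exactly when it separates one but not the other of them from
`p`. For finite sets `s`, `t` the difference of indicator functions has entries in `{-1, 0, 1}`
and is nonzero exactly on `s ∆ t`, so its squared `ℓ²` norm is `#(s ∆ t)`.
-/

/-- A wall, represented by a subset `A ⊆ S`, separates `x` from `y` if exactly one
of `x`, `y` lies in `A`. -/
def Wall.Separates {S : Type*} (A : Set S) (x y : S) : Prop := Xor' (x ∈ A) (y ∈ A)

/-- The wall pseudometric: the number of walls of `W` separating `x` from `y`. -/
noncomputable def wallDist {S : Type*} (W : Set (Set S)) (x y : S) : ℕ :=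
  {A ∈ W | Wall.Separates A x y}.ncard

/-- The set of walls of `W` separating `x` from the basepoint `p`. -/
def wallSigma {S : Type*} (W : Set (Set S)) (p x : S) : Set (Set S) :=
  {A ∈ W | Wall.Separates A x p}

open scoped symmDiff ENNReal

section IndicatorLp

variable {ι : Type*}

theorem Set.Finite.tsum_indicator_one {s : Set ι} (hs : s.Finite) :
    ∑' i, s.indicator (1 : ι → ℝ) i = s.ncard := by
  rw [tsum_eq_finsum (hs.subset Set.support_indicator_subset), ← finsum_mem_def,
    ← finsum_one, Nat.cast_finsum_mem hs]
  simp

theorem Set.Finite.memℓp_indicator_one {s : Set ι} (hs : s.Finite) (p : ℝ≥0∞) :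
    Memℓp (s.indicator (1 : ι → ℝ)) p :=
  (memℓp_zero (hs.subset Set.support_indicator_subset)).of_exponent_ge zero_le

noncomputable def Set.Finite.indicatorLp {s : Set ι} (hs : s.Finite) (p : ℝ≥0∞) :
    lp (fun _ : ι => ℝ) p :=
  ⟨s.indicator 1, hs.memℓp_indicator_one p⟩

theorem Set.Finite.coe_indicatorLp {s : Set ι} (hs : s.Finite) (p : ℝ≥0∞) :
    (hs.indicatorLp p : ι → ℝ) = s.indicator 1 :=
  rfl

theorem Set.Finite.norm_indicatorLp_sub_rpow {p : ℝ≥0∞} (hp : 0 < p.toReal) {s t : Set ι}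
    (hs : s.Finite) (ht : t.Finite) :
    ‖hs.indicatorLp p - ht.indicatorLp p‖ ^ p.toReal = (s ∆ t).ncard := by
  have hentry : ∀ i, ‖s.indicator (1 : ι → ℝ) i - t.indicator 1 i‖ ^ p.toReal
      = (s ∆ t).indicator 1 i := by
    intro i
    rw [← Set.apply_indicator_symmDiff (g := fun r : ℝ => ‖r‖ ^ p.toReal) (by simp)]
    by_cases hi : i ∈ s ∆ t <;> simp [hi, Real.zero_rpow hp.ne']
  rw [lp.norm_rpow_eq_tsum hp]
  simp only [lp.coeFn_sub, Pi.sub_apply, coe_indicatorLp, hentry]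
  exact (hs.symmDiff ht).tsum_indicator_one

theorem Set.Finite.norm_indicatorLp_two_sub_sq {s t : Set ι} (hs : s.Finite) (ht : t.Finite) :
    ‖hs.indicatorLp 2 - ht.indicatorLp 2‖ ^ 2 = (s ∆ t).ncard := by
  rw [← Real.rpow_two, ← ENNReal.toReal_ofNat 2]
  exact hs.norm_indicatorLp_sub_rpow (by norm_num) ht

end IndicatorLp

section Walls

variable {S : Type*}

theorem Wall.separates_iff (A : Set S) (x y : S) :
    Wall.Separates A x y ↔ Xor (x ∈ A) (y ∈ A) :=
  Iff.rfl

theorem Wall.separates_iff_xor_separates (A : Set S) (x y p : S) :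
    Wall.Separates A x y ↔ Xor (Wall.Separates A x p) (Wall.Separates A y p) := by
  simp only [Wall.separates_iff, xor_def]
  tauto

theorem wallSigma_symmDiff (W : Set (Set S)) (p x y : S) :
    wallSigma W p x ∆ wallSigma W p y = {A ∈ W | Wall.Separates A x y} := by
  ext A
  simp only [wallSigma, Wall.separates_iff_xor_separates A x y p, Set.mem_symmDiff,
    Set.mem_ofPred_eq, xor_def]
  tauto

theorem ncard_preimage_wallSigma_symmDiff (W : Set (Set S)) (p x y : S) :
    ((Subtype.val ⁻¹' wallSigma W p x : Set W) ∆ (Subtype.val ⁻¹' wallSigma W p y)).ncard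
      = wallDist W x y := by
  rw [← Set.preimage_symmDiff, wallSigma_symmDiff]
  exact Set.ncard_preimage_of_injective_subset_range Subtype.val_injective
    (Subtype.range_coe ▸ Set.sep_subset W _)

end Walls

open Classical

/-- Fix a basepoint `p` and let `f : S → ℓ²(𝒲; ℝ)` send `x` to the
characteristic function of `σ_p(x)` (which is square-summable since `σ_p(x)` is
finite).  Then `‖f x − f y‖² = d_𝒲(x, y)` for all `x, y`; in particular `f` is an
isometric embedding of `(S, √d_𝒲)` into the real Hilbert space `ℓ²(𝒲)`. -/
theorem exists_isometric_embedding_into_lp_two {S : Type*} (W : Set (Set S))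
    (hfin : ∀ x y : S, {A ∈ W | Wall.Separates A x y}.Finite) (p : S) :
    ∃ f : S → lp (fun _ : W => ℝ) 2,
      (∀ (x : S) (A : W), (f x : ∀ _ : W, ℝ) A =
        if (A : Set S) ∈ wallSigma W p x then 1 else 0) ∧
      (∀ x y : S, ‖f x - f y‖ ^ 2 = (wallDist W x y : ℝ)) ∧
      (∀ x y : S, ‖f x - f y‖ = Real.sqrt (wallDist W x y)) := by
  have hσ : ∀ x, (Subtype.val ⁻¹' wallSigma W p x : Set W).Finite := fun x =>
    (hfin x p).preimage Subtype.val_injective.injOn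
  have hsq : ∀ x y, ‖(hσ x).indicatorLp 2 - (hσ y).indicatorLp 2‖ ^ 2 = (wallDist W x y : ℝ) :=
    fun x y => by
      rw [(hσ x).norm_indicatorLp_two_sub_sq (hσ y), ncard_preimage_wallSigma_symmDiff]
  refine ⟨fun x => (hσ x).indicatorLp 2, fun x A => ?_, hsq, fun x y => ?_⟩
  · simp [Set.Finite.coe_indicatorLp, Set.indicator_apply]
  · rw [← hsq, Real.sqrt_sq (norm_nonneg _)]
end

section
/- Let X be a path-connected, simply connected topological space, and let U and V be open subsets of X with U ∪ V = X such that U and V (with the subspace topology) are each nonempty, path-connected, and simply connected, and such that U ∩ V ≠ ∅. Then U ∩ V is path-connected. -/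
/-!
Join `x, y ∈ U ∩ V` by a path `a` in `U` and a path `b` in `V`, and let `H : I × I → X` be a
homotopy from `a` to `b`. By the Lebesgue number lemma the square is cut into a grid whose
cells each map into `U` or into `V`; colour a cell `true` if it maps into `U`, extending the
colouring by `true` to the left of the square (where `H = a`) and `false` to its right (where
`H = b`). Every grid edge between a `true` and a `false` cell maps into `U ∩ V`. Follow such
edges from the bottom right corner, where `H = x`, keeping `true` on the left. The successor
map of this walk is injective on boundary edges and the only predecessor of the starting edge
lies below the square, so the walk never repeats. Trapped between the two sides, it must reach
the top edge, where `H = y`.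
-/

open Set Function Relation unitInterval

theorem Function.Injective.iterate_apply_injective {α : Type*} {f : α → α} (hf : Injective f)
    {x y : α} (hy : f y = x) (hx : ∀ k, f^[k] x ≠ y) : Injective (f^[·] x) := by
  intro a b hab
  by_contra hne
  wlog hlt : a < b generalizing a b
  · exact this hab.symm (Ne.symm hne) (by omega)
  obtain ⟨p, hp⟩ : ∃ p, b - a = p + 1 := ⟨b - a - 1, by omega⟩
  have hcycle : f (f^[p] x) = f y :=
    calc f (f^[p] x) = f^[b - a] x := by rw [hp, iterate_succ_apply']
      _ = x := iterate_cancel hf hab.symm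
      _ = f y := hy.symm
  exact hx p (hf hcycle)

theorem unitInterval.isPathConnected_uIcc (a b : I) : IsPathConnected (uIcc a b) := by
  rw [Topology.IsInducing.subtypeVal.isPathConnected_iff, image_subtype_val_uIcc]
  exact (convex_uIcc (a : ℝ) b).isPathConnected nonempty_uIcc

namespace GridWalk

inductive Dir | up | right | down | left
  deriving DecidableEq

namespace Dir

instance : Fintype Dir := ⟨{up, right, down, left}, by intro d; cases d <;> simp⟩

def rot : Dir → Dir
  | up => right | right => down | down => left | left => up

def vec : Dir → ℤ × ℤ
  | up => (0, 1) | right => (1, 0) | down => (0, -1) | left => (-1, 0)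

/-- The wall-follower rule at a vertex whose surrounding cells have colours `g`, indexed as by
`frontLeft`: turn as far right as possible while keeping `true` on the left. -/
def turn (g : Dir → Bool) (d : Dir) : Dir :=
  if g d.rot then d.rot else if g d then d else d.rot.rot.rot

theorem turn_spec (g : Dir → Bool) (d : Dir) (h : g d.rot.rot.rot = true ∧ g d.rot.rot = false) :
    g (turn g d) = true ∧ g (turn g d).rot = false := by
  revert g d; decide

theorem eq_of_turn_eq (g : Dir → Bool) {d d' : Dir}
    (h : g d.rot.rot.rot = true ∧ g d.rot.rot = false)
    (h' : g d'.rot.rot.rot = true ∧ g d'.rot.rot = false) (hturn : turn g d = turn g d') :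
    d = d' := by
  revert g d d'; decide

end Dir

open Dir

/-- Cell `u` is the unit square with lower left corner `u`. A walker at vertex `v` facing `d` has
the cell `frontLeft v d` ahead on its left and `frontLeft v d.rot` ahead on its right. -/
def frontLeft (v : ℤ × ℤ) : Dir → ℤ × ℤ
  | up => (v.1 - 1, v.2)
  | right => v
  | down => (v.1, v.2 - 1)
  | left => (v.1 - 1, v.2 - 1)

theorem frontLeft_add_vec_rot_rot_rot (v : ℤ × ℤ) (d : Dir) :
    frontLeft (v + d.vec) d.rot.rot.rot = frontLeft v d := by
  cases d <;> simp [frontLeft, vec, rot, Prod.ext_iff, sub_eq_add_neg]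

theorem frontLeft_add_vec_rot_rot (v : ℤ × ℤ) (d : Dir) :
    frontLeft (v + d.vec) d.rot.rot = frontLeft v d.rot := by
  cases d <;> simp [frontLeft, vec, rot, Prod.ext_iff, sub_eq_add_neg]

variable (c : ℤ × ℤ → Bool)

def IsBoundaryEdge (e : (ℤ × ℤ) × Dir) : Prop :=
  c (frontLeft e.1 e.2) = true ∧ c (frontLeft e.1 e.2.rot) = false

def BoundaryAdj (v w : ℤ × ℤ) : Prop :=
  ∃ d, IsBoundaryEdge c (v, d) ∧ w = v + d.vec

theorem isBoundaryEdge_iff_behind_target (v : ℤ × ℤ) (d : Dir) :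
    IsBoundaryEdge c (v, d) ↔ c (frontLeft (v + d.vec) d.rot.rot.rot) = true ∧
      c (frontLeft (v + d.vec) d.rot.rot) = false := by
  rw [frontLeft_add_vec_rot_rot_rot, frontLeft_add_vec_rot_rot]; rfl

def BoundaryEdge : Type := {e : (ℤ × ℤ) × Dir // IsBoundaryEdge c e}

def next (e : (ℤ × ℤ) × Dir) : (ℤ × ℤ) × Dir :=
  (e.1 + e.2.vec, turn (fun d ↦ c (frontLeft (e.1 + e.2.vec) d)) e.2)

theorem IsBoundaryEdge.next {e : (ℤ × ℤ) × Dir} (he : IsBoundaryEdge c e) :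
    IsBoundaryEdge c (next c e) :=
  turn_spec (fun d ↦ c (frontLeft (e.1 + e.2.vec) d)) e.2 <|
    (isBoundaryEdge_iff_behind_target c e.1 e.2).1 he

theorem mem_Icc_frontLeft (v : ℤ × ℤ) (d : Dir) :
    v ∈ Icc (frontLeft v d) (frontLeft v d + (1, 1)) := by
  cases d <;> simp [frontLeft, Prod.le_def]

theorem add_vec_mem_Icc_frontLeft (v : ℤ × ℤ) (d : Dir) :
    v + d.vec ∈ Icc (frontLeft v d) (frontLeft v d + (1, 1)) := by
  simpa only [frontLeft_add_vec_rot_rot_rot] using mem_Icc_frontLeft (v + d.vec) d.rot.rot.rot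

theorem add_vec_mem_Icc_frontLeft_rot (v : ℤ × ℤ) (d : Dir) :
    v + d.vec ∈ Icc (frontLeft v d.rot) (frontLeft v d.rot + (1, 1)) := by
  simpa only [frontLeft_add_vec_rot_rot] using mem_Icc_frontLeft (v + d.vec) d.rot.rot

namespace BoundaryEdge

def next (e : BoundaryEdge c) : BoundaryEdge c := ⟨GridWalk.next c e.1, e.2.next c⟩

theorem next_injective : Injective (next c) := by
  rintro ⟨⟨v, d⟩, he⟩ ⟨⟨v', d'⟩, he'⟩ h
  obtain ⟨hw, hturn⟩ : v + d.vec = v' + d'.vec ∧ turn (fun d₀ ↦ c (frontLeft (v + d.vec) d₀)) d =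
      turn (fun d₀ ↦ c (frontLeft (v' + d'.vec) d₀)) d' :=
    Prod.mk.inj (congrArg Subtype.val h)
  have harr := (isBoundaryEdge_iff_behind_target c v d).1 he
  have harr' := (isBoundaryEdge_iff_behind_target c v' d').1 he'
  rw [← hw] at hturn harr'
  obtain rfl : d = d' := eq_of_turn_eq _ harr harr' hturn
  obtain rfl : v = v' := add_right_cancel hw
  rfl

end BoundaryEdge

section Strip

variable {c} {n : ℤ} (hleft : ∀ u : ℤ × ℤ, u.1 < 0 → c u = true)
  (hright : ∀ u : ℤ × ℤ, n ≤ u.1 → c u = false)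
  (hbelow : ∀ u : ℤ × ℤ, 0 ≤ u.1 → u.1 < n → u.2 < 0 → c u = true)
include hleft hright

theorem IsBoundaryEdge.fst_mem_Icc {e : (ℤ × ℤ) × Dir} (he : IsBoundaryEdge c e) :
    e.1.1 ∈ Icc 0 n := by
  obtain ⟨htrue, hfalse⟩ := he
  have h₁ : (frontLeft e.1 e.2).1 < n := by
    by_contra! h; simp [hright _ h] at htrue
  have h₂ : 0 ≤ (frontLeft e.1 e.2.rot).1 := by
    by_contra! h; simp [hleft _ h] at hfalse
  have h₃ := (mem_Icc_frontLeft e.1 e.2).2.1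
  have h₄ := (mem_Icc_frontLeft e.1 e.2.rot).1.1
  simp only [Prod.fst_add] at h₃
  constructor <;> omega

include hbelow

theorem IsBoundaryEdge.one_le_snd_of_down {v : ℤ × ℤ} (he : IsBoundaryEdge c (v, down)) :
    1 ≤ v.2 := by
  obtain ⟨htrue, hfalse⟩ := he
  simp only [frontLeft, rot] at htrue hfalse
  have h₁ : v.1 < n := by
    by_contra! h; simp [hright (v.1, v.2 - 1) h] at htrue
  have h₂ : 0 ≤ v.1 - 1 := by
    by_contra! h; simp [hleft (v.1 - 1, v.2 - 1) h] at hfalse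
  by_contra! h
  simp [hbelow (v.1 - 1, v.2 - 1) h₂ (by omega) (by simp; omega)] at hfalse

theorem isBoundaryEdge_up_of_neg {j : ℤ} (hj : j < 0) : IsBoundaryEdge c ((n, j), up) := by
  refine ⟨?_, hright (n, j) le_rfl⟩
  rcases lt_or_ge (n - 1) 0 with h | h
  exacts [hleft _ h, hbelow _ h (by simp [frontLeft]) hj]

theorem neg_one_le_snd_next {e : (ℤ × ℤ) × Dir} (he : IsBoundaryEdge c e) (h : -1 ≤ e.1.2) :
    -1 ≤ (next c e).1.2 := by
  obtain ⟨v, d⟩ := e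
  dsimp only at h
  cases d
  case down => have := he.one_le_snd_of_down hleft hright hbelow; simp [next, vec]; omega
  all_goals simp [next, vec]; omega

theorem exists_reflTransGen_boundaryAdj_le_snd (m : ℤ) :
    ∃ w, ReflTransGen (BoundaryAdj c) (n, -1) w ∧ m ≤ w.2 := by
  let f := BoundaryEdge.next c
  let start : BoundaryEdge c :=
    ⟨((n, -1), up), isBoundaryEdge_up_of_neg hleft hright hbelow (by simp)⟩
  let pre : BoundaryEdge c :=
    ⟨((n, -2), up), isBoundaryEdge_up_of_neg hleft hright hbelow (by simp)⟩
  have hpre : f pre = start := by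
    have h₁ : c (n, -1) = false := hright _ le_rfl
    have h₂ : c (n - 1, -1) = true := start.2.1
    apply Subtype.ext
    simp [f, pre, start, BoundaryEdge.next, next, turn, frontLeft, rot, vec, h₁, h₂]
  have hreach : ∀ k, ReflTransGen (BoundaryAdj c) (n, -1) (f^[k] start).1.1 := by
    intro k
    induction k with
    | zero => rfl
    | succ k ih =>
      rw [iterate_succ_apply']
      exact ih.tail ⟨_, (f^[k] start).2, rfl⟩
  have hheight : ∀ k, -1 ≤ (f^[k] start).1.1.2 := by
    intro k
    induction k with
    | zero => exact le_rfl
    | succ k ih =>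
      rw [iterate_succ_apply']
      exact neg_one_le_snd_next hleft hright hbelow (f^[k] start).2 ih
  have hinj : Injective (f^[·] start) :=
    (BoundaryEdge.next_injective c).iterate_apply_injective hpre fun k hk ↦ by
      have h := hheight k
      rw [hk] at h
      simp [pre] at h
  by_contra! hlow
  refine infinite_range_of_injective hinj <| ((finite_Icc ((0 : ℤ), (-1 : ℤ)) (n, m - 1)).prod
    finite_univ).preimage Subtype.val_injective.injOn |>.subset ?_
  rintro _ ⟨k, rfl⟩
  obtain ⟨h₀, hₙ⟩ := (f^[k] start).2.fst_mem_Icc hleft hright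
  exact ⟨⟨⟨h₀, hheight k⟩, hₙ, Int.le_sub_one_of_lt (hlow _ (hreach k))⟩, mem_univ _⟩

end Strip

def gridCell {α : Type*} [Preorder α] (τ : ℤ → α) (u : ℤ × ℤ) : Set (α × α) :=
  Icc (Prod.map τ τ u) (Prod.map τ τ (u + (1, 1)))

theorem uIcc_subset_gridCell {α : Type*} [Lattice α] {τ : ℤ → α} (hτ : Monotone τ)
    (v : ℤ × ℤ) (d : Dir) :
    uIcc (Prod.map τ τ v) (Prod.map τ τ (v + d.vec)) ⊆
      gridCell τ (frontLeft v d) ∩ gridCell τ (frontLeft v d.rot) := by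
  have hmap := hτ.prodMap hτ
  have hmem {u w : ℤ × ℤ} (h : w ∈ Icc u (u + (1, 1))) : Prod.map τ τ w ∈ gridCell τ u :=
    ⟨hmap h.1, hmap h.2⟩
  exact subset_inter
    (uIcc_subset_Icc (hmem (mem_Icc_frontLeft v d)) (hmem (add_vec_mem_Icc_frontLeft v d)))
    (uIcc_subset_Icc (hmem (mem_Icc_frontLeft v d.rot)) (hmem (add_vec_mem_Icc_frontLeft_rot v d)))

theorem fst_eq_of_mem_gridCell {α : Type*} [PartialOrder α] {τ : ℤ → α} {u : ℤ × ℤ}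
    {p : α × α} (hp : p ∈ gridCell τ u) {s : α} (h₀ : τ u.1 = s) (h₁ : τ (u.1 + 1) = s) :
    p.1 = s :=
  le_antisymm (h₁ ▸ hp.2.1) (h₀ ▸ hp.1.1)

theorem snd_eq_of_mem_gridCell {α : Type*} [PartialOrder α] {τ : ℤ → α} {u : ℤ × ℤ}
    {p : α × α} (hp : p ∈ gridCell τ u) {s : α} (h₀ : τ u.2 = s) (h₁ : τ (u.2 + 1) = s) :
    p.2 = s :=
  le_antisymm (h₁ ▸ hp.2.2) (h₀ ▸ hp.1.2)

section Grid

variable {X : Type*} [TopologicalSpace X] {F : I × I → X} {τ : ℤ → I} {c : ℤ × ℤ → Bool}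
  {U V : Set X}

theorem joinedIn_of_boundaryAdj (hF : Continuous F) (hτ : Monotone τ)
    (hU : ∀ u, c u = true → gridCell τ u ⊆ F ⁻¹' U)
    (hV : ∀ u, c u = false → gridCell τ u ⊆ F ⁻¹' V) {v w : ℤ × ℤ} (h : BoundaryAdj c v w) :
    JoinedIn (U ∩ V) (F (Prod.map τ τ v)) (F (Prod.map τ τ w)) := by
  obtain ⟨d, ⟨htrue, hfalse⟩, rfl⟩ := h
  have hedge : IsPathConnected (uIcc (Prod.map τ τ v) (Prod.map τ τ (v + d.vec))) := by
    rw [uIcc_prod_eq]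
    exact (isPathConnected_uIcc _ _).prod (isPathConnected_uIcc _ _)
  refine ((hedge.image hF).joinedIn _ (mem_image_of_mem F left_mem_uIcc) _
    (mem_image_of_mem F right_mem_uIcc)).mono (image_subset_iff.2 fun p hp ↦ ?_)
  have hp := uIcc_subset_gridCell hτ v d hp
  exact ⟨hU _ htrue hp.1, hV _ hfalse hp.2⟩

theorem joinedIn_of_reflTransGen_boundaryAdj (hF : Continuous F) (hτ : Monotone τ)
    (hU : ∀ u, c u = true → gridCell τ u ⊆ F ⁻¹' U)
    (hV : ∀ u, c u = false → gridCell τ u ⊆ F ⁻¹' V) {v w : ℤ × ℤ}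
    (hv : F (Prod.map τ τ v) ∈ U ∩ V) (h : ReflTransGen (BoundaryAdj c) v w) :
    JoinedIn (U ∩ V) (F (Prod.map τ τ v)) (F (Prod.map τ τ w)) := by
  induction h with
  | refl => exact JoinedIn.refl hv
  | tail _ hadj ih => exact ih.trans (joinedIn_of_boundaryAdj hF hτ hU hV hadj)

theorem exists_gridCell_subset (hF : Continuous F) (hU : IsOpen U) (hV : IsOpen V)
    (hUV : U ∪ V = univ) :
    ∃ τ : ℤ → I, Monotone τ ∧ (∀ i ≤ 0, τ i = 0) ∧ (∃ N : ℕ, ∀ i ≥ (N : ℤ), τ i = 1) ∧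
      ∀ u, gridCell τ u ⊆ F ⁻¹' U ∨ gridCell τ u ⊆ F ⁻¹' V := by
  obtain ⟨t, ht0, ht, ⟨N, htN⟩, hsub⟩ :=
    exists_monotone_Icc_subset_open_cover_unitInterval_prod_self
      (c := fun b : Bool ↦ F ⁻¹' bif b then U else V)
      (by rintro (_ | _); exacts [hV.preimage hF, hU.preimage hF])
      (fun p _ ↦ by
        rcases (hUV.symm ▸ mem_univ (F p) : F p ∈ U ∪ V) with h | h
        exacts [mem_iUnion.2 ⟨true, h⟩, mem_iUnion.2 ⟨false, h⟩])
  refine ⟨fun i ↦ t i.toNat, ht.comp fun _ _ ↦ Int.toNat_le_toNat, fun i hi ↦ ?_,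
    ⟨N, fun i hi ↦ htN _ (by omega)⟩, fun u ↦ ?_⟩
  · show t i.toNat = 0
    rw [Int.toNat_eq_zero.2 hi, ht0]
  · obtain ⟨b, hb⟩ := hsub u.1.toNat u.2.toNat
    have hcell : gridCell (fun i ↦ t i.toNat) u ⊆
        Icc (t u.1.toNat) (t (u.1.toNat + 1)) ×ˢ Icc (t u.2.toNat) (t (u.2.toNat + 1)) :=
      fun p ⟨h₁, h₂⟩ ↦ ⟨⟨h₁.1, h₂.1.trans (ht (by omega))⟩, h₁.2, h₂.2.trans (ht (by omega))⟩
    cases b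
    exacts [Or.inr (hcell.trans hb), Or.inl (hcell.trans hb)]

end Grid

end GridWalk

open GridWalk

theorem Path.Homotopy.joinedIn_inter {X : Type*} [TopologicalSpace X] {U V : Set X} {x y : X}
    {a b : Path x y} (H : a.Homotopy b) (hU : IsOpen U) (hV : IsOpen V) (hUV : U ∪ V = univ)
    (ha : ∀ s, a s ∈ U) (hb : ∀ s, b s ∈ V) : JoinedIn (U ∩ V) x y := by
  classical
  obtain ⟨τ, hτ, hτ0, ⟨N, hτN⟩, hcell⟩ := exists_gridCell_subset H.continuous hU hV hUV
  -- The cells outside the square are degenerate: they lie on `{0} × I` (where `H = a`) to its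
  -- left, on `{1} × I` (where `H = b`) to its right, and on `I × {0}` (where `H = x`) below it.
  let c : ℤ × ℤ → Bool := fun u ↦ decide (u.1 < N ∧ gridCell τ u ⊆ H ⁻¹' U)
  have hcU : ∀ u, c u = true → gridCell τ u ⊆ H ⁻¹' U := fun u h ↦ (of_decide_eq_true h).2
  have hcV : ∀ u, c u = false → gridCell τ u ⊆ H ⁻¹' V := by
    intro u h
    rcases lt_or_ge u.1 N with hN | hN
    · exact (hcell u).resolve_left fun hU' ↦ by simp [c, hN, hU'] at h
    · rintro ⟨s, t⟩ hp
      obtain rfl := fst_eq_of_mem_gridCell hp (hτN _ hN) (hτN _ (by omega))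
      simpa using hb t
  have hleft : ∀ u : ℤ × ℤ, u.1 < 0 → c u = true := by
    refine fun u hu ↦ decide_eq_true ⟨by omega, ?_⟩
    rintro ⟨s, t⟩ hp
    obtain rfl := fst_eq_of_mem_gridCell hp (hτ0 _ hu.le) (hτ0 _ (by omega))
    simpa using ha t
  have hright : ∀ u : ℤ × ℤ, N ≤ u.1 → c u = false :=
    fun u hu ↦ decide_eq_false fun h ↦ by omega
  have hbelow : ∀ u : ℤ × ℤ, 0 ≤ u.1 → u.1 < N → u.2 < 0 → c u = true := by
    refine fun u _ hN hu ↦ decide_eq_true ⟨hN, ?_⟩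
    rintro ⟨s, t⟩ hp
    obtain rfl := snd_eq_of_mem_gridCell hp (hτ0 _ hu.le) (hτ0 _ (by omega))
    simpa using ha 0
  obtain ⟨w, hw, hNw⟩ := exists_reflTransGen_boundaryAdj_le_snd hleft hright hbelow N
  have hstart : H (Prod.map τ τ (N, -1)) = x := by
    rw [Prod.map_apply, hτ0 (-1) (by norm_num), H.source]
  have hend : H (Prod.map τ τ w) = y := by
    rw [Prod.map_apply, hτN _ hNw, H.target]
  have hx : x ∈ U ∩ V := ⟨by simpa using ha 0, by simpa using hb 0⟩
  have := joinedIn_of_reflTransGen_boundaryAdj H.continuous hτ hcU hcV (hstart.symm ▸ hx) hw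
  rwa [hstart, hend] at this

theorem isPathConnected_inter_of_simplyConnected_general
    {X : Type*} [TopologicalSpace X] [SimplyConnectedSpace X]
    (U V : Set X) (hUopen : IsOpen U) (hVopen : IsOpen V)
    (hUV : U ∪ V = Set.univ)
    (hUpc : IsPathConnected U) (hVpc : IsPathConnected V)
    (hint : (U ∩ V).Nonempty) :
    IsPathConnected (U ∩ V) := by
  obtain ⟨x, hx⟩ := hint
  refine ⟨x, hx, fun {y} hy ↦ ?_⟩
  obtain ⟨a, ha⟩ := hUpc.joinedIn x hx.1 y hy.1
  obtain ⟨b, hb⟩ := hVpc.joinedIn x hx.2 y hy.2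
  exact (SimplyConnectedSpace.paths_homotopic a b).some.joinedIn_inter hUopen hVopen hUV ha hb

/-- If a path-connected, simply connected space `X` is the union of
two open, nonempty, path-connected, simply connected subsets `U`, `V` with
`U ∩ V ≠ ∅`, then `U ∩ V` is path-connected. -/
theorem isPathConnected_inter_of_simplyConnected
    {X : Type*} [TopologicalSpace X] [PathConnectedSpace X] [SimplyConnectedSpace X]
    (U V : Set X) (hUopen : IsOpen U) (hVopen : IsOpen V)
    (hUV : U ∪ V = Set.univ)
    (hUne : U.Nonempty) (hVne : V.Nonempty)
    (hUpc : IsPathConnected U) (hVpc : IsPathConnected V)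
    (hUsc : SimplyConnectedSpace U) (hVsc : SimplyConnectedSpace V)
    (hint : (U ∩ V).Nonempty) :
    IsPathConnected (U ∩ V) :=
  isPathConnected_inter_of_simplyConnected_general U V hUopen hVopen hUV hUpc hVpc hint
end
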